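/- arXiv:1709.03471 — 5 statements merged into one kernel-verified Lean document; each statement's English description precedes it below -/
import Mathlib

section
/- Let μ > 0 and ν ≥ 1 be real numbers, and set B := (μ^⌊μ⌋ / ⌊μ⌋!)^(ν−1). Then for every natural number y, (μ^y / y!)^ν ≤ B · (μ^y / y!). In other words, the unnormalised COM-Poisson mass function with parameters (μ, ν) is dominated by B times the unnormalised Poisson(μ) mass function. -/
lemma pois_pos (μ : ℝ) (hμ : 0 < μ) (k : ℕ) : 0 < μ ^ k / (Nat.factorial k : ℝ) :=
  div_pos (pow_pos hμ k) (by exact_mod_cast Nat.factorial_pos k)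

lemma pois_step_up (μ : ℝ) (hμ : 0 < μ) (k : ℕ) (h : (k + 1 : ℝ) ≤ μ) :
    μ ^ k / (Nat.factorial k : ℝ) ≤ μ ^ (k + 1) / (Nat.factorial (k + 1) : ℝ) := by
  rw [Nat.factorial_succ, pow_succ]
  push_cast
  rw [div_le_div_iff₀ (by exact_mod_cast Nat.factorial_pos k)
    (by positivity)]
  have hk : (0:ℝ) < (Nat.factorial k : ℝ) := by exact_mod_cast Nat.factorial_pos k
  have h2 := mul_le_mul_of_nonneg_left h (mul_pos (pow_pos hμ k) hk).le
  nlinarith [h2]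

lemma pois_step_down (μ : ℝ) (hμ : 0 < μ) (k : ℕ) (h : μ ≤ (k + 1 : ℝ)) :
    μ ^ (k + 1) / (Nat.factorial (k + 1) : ℝ) ≤ μ ^ k / (Nat.factorial k : ℝ) := by
  rw [Nat.factorial_succ, pow_succ]
  push_cast
  rw [div_le_div_iff₀ (by positivity) (by exact_mod_cast Nat.factorial_pos k)]
  have hk : (0:ℝ) < (Nat.factorial k : ℝ) := by exact_mod_cast Nat.factorial_pos k
  have h2 := mul_le_mul_of_nonneg_left h (mul_pos (pow_pos hμ k) hk).le
  nlinarith [h2]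

lemma pois_le_mode (μ : ℝ) (hμ : 0 < μ) (y : ℕ) :
    μ ^ y / (Nat.factorial y : ℝ) ≤ μ ^ ⌊μ⌋₊ / (Nat.factorial ⌊μ⌋₊ : ℝ) := by
  set m := ⌊μ⌋₊ with hm
  rcases le_or_gt y m with h | h
  · -- increasing up to m
    have : ∀ n, y ≤ n → n ≤ m →
        μ ^ y / (Nat.factorial y : ℝ) ≤ μ ^ n / (Nat.factorial n : ℝ) := by
      intro n hn
      induction n, hn using Nat.le_induction with
      | base => intro _; exact le_rfl
      | succ n hn ih =>
        intro hnm
        have h1 : μ ^ y / (Nat.factorial y : ℝ) ≤ μ ^ n / (Nat.factorial n : ℝ) :=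
          ih (Nat.le_of_succ_le hnm)
        refine h1.trans (pois_step_up μ hμ n ?_)
        have : ((n + 1 : ℕ) : ℝ) ≤ (m : ℝ) := by exact_mod_cast hnm
        calc (n + 1 : ℝ) ≤ (m : ℝ) := by exact_mod_cast hnm
          _ ≤ μ := Nat.floor_le hμ.le
    exact this m h le_rfl
  · -- decreasing past m
    have : ∀ n, m ≤ n →
        μ ^ n / (Nat.factorial n : ℝ) ≤ μ ^ m / (Nat.factorial m : ℝ) := by
      intro n hn
      induction n, hn using Nat.le_induction with
      | base => exact le_rfl
      | succ n hn ih =>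
        refine (pois_step_down μ hμ n ?_).trans ih
        have h2 : μ < (m : ℝ) + 1 := Nat.lt_floor_add_one μ
        have h3 : (m : ℝ) ≤ n := by exact_mod_cast hn
        linarith
    exact this y h.le

/-- For `μ > 0`, `ν ≥ 1` and `B := (μ^⌊μ⌋ / ⌊μ⌋!)^(ν−1)`, for every natural `y`,
`(μ^y / y!)^ν ≤ B · (μ^y / y!)` (Poisson envelope inequality). -/
theorem stmt_2 (μ ν : ℝ) (hμ : 0 < μ) (hν : 1 ≤ ν)
    (B : ℝ) (hB : B = (μ ^ ⌊μ⌋₊ / (Nat.factorial ⌊μ⌋₊ : ℝ)) ^ (ν - 1)) (y : ℕ) :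
    (μ ^ y / (Nat.factorial y : ℝ)) ^ ν ≤ B * (μ ^ y / (Nat.factorial y : ℝ)) := by
  have hy : 0 < μ ^ y / (Nat.factorial y : ℝ) := pois_pos μ hμ y
  have hmode := pois_le_mode μ hμ y
  have : (μ ^ y / (Nat.factorial y : ℝ)) ^ ν
      = (μ ^ y / (Nat.factorial y : ℝ)) ^ (ν - 1) * (μ ^ y / (Nat.factorial y : ℝ)) := by
    rw [show ν = (ν - 1) + 1 by ring]
    rw [Real.rpow_add hy, Real.rpow_one]
    ring_nf
  rw [this, hB]
  exact mul_le_mul_of_nonneg_right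
    (Real.rpow_le_rpow hy.le hmode (by linarith)) hy.le
end

section
/- Let μ > 0, ν > 0 and 0 < p < 1 be real numbers, and for natural numbers y define a_y := μ^(νy) / ((1−p)^y · (y!)^ν). Then for every natural number y, the two neighbour inequalities a_y ≥ a_{y+1} and (in case y ≥ 1) a_y ≥ a_{y−1} both hold if and only if μ/(1−p)^(1/ν) − 1 ≤ y ≤ μ/(1−p)^(1/ν). -/
/-! The ratio of consecutive terms is `a (y + 1) / a y = μ ^ ν / ((1 - p) * (y + 1) ^ ν)`, and
`(1 - p) * t ^ ν = ((1 - p) ^ (1 / ν) * t) ^ ν`, so, `t ↦ t ^ ν` being strictly monotone,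
`a (y + 1) ≤ a y` holds exactly when `μ / (1 - p) ^ (1 / ν) ≤ y + 1`, and the reverse inequality
exactly when `y + 1 ≤ μ / (1 - p) ^ (1 / ν)`. Both neighbour inequalities at `y` are these two
conditions at `y` and at `y - 1`. -/

open Real

theorem mul_rpow_eq_rpow_one_div_mul_rpow {q t ν : ℝ} (hq : 0 ≤ q) (ht : 0 ≤ t) (hν : ν ≠ 0) :
    q * t ^ ν = (q ^ (1 / ν) * t) ^ ν := by
  rw [mul_rpow (rpow_nonneg hq _) ht, ← rpow_mul hq, one_div_mul_cancel hν, rpow_one]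

noncomputable def comPoissonGeomRatio (μ ν q : ℝ) (y : ℕ) : ℝ :=
  μ ^ (ν * (y : ℝ)) / (q ^ y * (y.factorial : ℝ) ^ ν)

namespace comPoissonGeomRatio

variable {μ ν q : ℝ}

theorem pos (hμ : 0 < μ) (hq : 0 < q) (y : ℕ) : 0 < comPoissonGeomRatio μ ν q y := by
  have := y.factorial_pos
  unfold comPoissonGeomRatio
  positivity

theorem succ (hμ : 0 < μ) (hq : 0 < q) (y : ℕ) :
    comPoissonGeomRatio μ ν q (y + 1) =
      comPoissonGeomRatio μ ν q y * (μ ^ ν / (q * ((y : ℝ) + 1) ^ ν)) := by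
  have hμpow : μ ^ (ν * ((y + 1 : ℕ) : ℝ)) = μ ^ (ν * (y : ℝ)) * μ ^ ν := by
    rw [← rpow_add hμ]; push_cast; ring_nf
  have hfact : ((y + 1).factorial : ℝ) ^ ν = ((y : ℝ) + 1) ^ ν * (y.factorial : ℝ) ^ ν := by
    rw [Nat.factorial_succ]; push_cast
    exact mul_rpow (by positivity) (by positivity)
  have := y.factorial_pos
  unfold comPoissonGeomRatio
  rw [hμpow, hfact, pow_succ]
  field_simp

theorem succ_le_iff (hμ : 0 < μ) (hν : 0 < ν) (hq : 0 < q) (y : ℕ) :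
    comPoissonGeomRatio μ ν q (y + 1) ≤ comPoissonGeomRatio μ ν q y ↔
      μ / q ^ (1 / ν) ≤ (y : ℝ) + 1 := by
  have hc : 0 < q ^ (1 / ν) := rpow_pos_of_pos hq _
  rw [succ hμ hq, mul_le_iff_le_one_right (pos hμ hq y), div_le_one (by positivity),
    mul_rpow_eq_rpow_one_div_mul_rpow hq.le (by positivity) hν.ne',
    rpow_le_rpow_iff hμ.le (by positivity) hν, div_le_iff₀ hc, mul_comm]

theorem le_succ_iff (hμ : 0 < μ) (hν : 0 < ν) (hq : 0 < q) (y : ℕ) :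
    comPoissonGeomRatio μ ν q y ≤ comPoissonGeomRatio μ ν q (y + 1) ↔
      (y : ℝ) + 1 ≤ μ / q ^ (1 / ν) := by
  have hc : 0 < q ^ (1 / ν) := rpow_pos_of_pos hq _
  rw [succ hμ hq, le_mul_iff_one_le_right (pos hμ hq y), one_le_div (by positivity),
    mul_rpow_eq_rpow_one_div_mul_rpow hq.le (by positivity) hν.ne',
    rpow_le_rpow_iff (by positivity) hμ.le hν, le_div_iff₀ hc, mul_comm]

end comPoissonGeomRatio

theorem stmt_4_general (μ ν p : ℝ) (hμ : 0 < μ) (hν : 0 < ν) (hp1 : p < 1)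
    (a : ℕ → ℝ)
    (ha : ∀ y : ℕ, a y = μ ^ (ν * (y : ℝ)) / ((1 - p) ^ y * (Nat.factorial y : ℝ) ^ ν))
    (y : ℕ) :
    (a y ≥ a (y + 1) ∧ (1 ≤ y → a y ≥ a (y - 1))) ↔
      (μ / (1 - p) ^ (1 / ν) - 1 ≤ (y : ℝ) ∧ (y : ℝ) ≤ μ / (1 - p) ^ (1 / ν)) := by
  have hq : 0 < 1 - p := by linarith
  have hfa : a = comPoissonGeomRatio μ ν (1 - p) := funext ha
  have hright : a y ≥ a (y + 1) ↔ μ / (1 - p) ^ (1 / ν) - 1 ≤ y := by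
    rw [hfa, ge_iff_le, comPoissonGeomRatio.succ_le_iff hμ hν hq, sub_le_iff_le_add]
  have hleft : (1 ≤ y → a y ≥ a (y - 1)) ↔ (y : ℝ) ≤ μ / (1 - p) ^ (1 / ν) := by
    rw [hfa]
    cases y with
    | zero => simpa using div_nonneg hμ.le (rpow_nonneg hq.le _)
    | succ k =>
      simpa using comPoissonGeomRatio.le_succ_iff hμ hν hq k
  exact and_congr hright hleft

/-- For `μ > 0`, `ν > 0`, `0 < p < 1` and
`a_y := μ^(νy) / ((1−p)^y · (y!)^ν)`, for every natural `y` the two neighbour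
inequalities `a_y ≥ a_{y+1}` and (if `y ≥ 1`) `a_y ≥ a_{y−1}` both hold iff
`μ/(1−p)^(1/ν) − 1 ≤ y ≤ μ/(1−p)^(1/ν)`. -/
theorem stmt_4 (μ ν p : ℝ) (hμ : 0 < μ) (hν : 0 < ν) (hp0 : 0 < p) (hp1 : p < 1)
    (a : ℕ → ℝ)
    (ha : ∀ y : ℕ, a y = μ ^ (ν * (y : ℝ)) / ((1 - p) ^ y * (Nat.factorial y : ℝ) ^ ν))
    (y : ℕ) :
    (a y ≥ a (y + 1) ∧ (1 ≤ y → a y ≥ a (y - 1))) ↔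
      (μ / (1 - p) ^ (1 / ν) - 1 ≤ (y : ℝ) ∧ (y : ℝ) ≤ μ / (1 - p) ^ (1 / ν)) :=
  stmt_4_general μ ν p hμ hν hp1 a ha y
end

section
/- Let μ > 0, ν > 0 and 0 < p < 1 be real numbers, and for natural numbers y define a_y := μ^(νy) / ((1−p)^y · (y!)^ν). Then for every natural number y, a_y ≤ a_{y_m}, where y_m := ⌊μ/(1−p)^(1/ν)⌋, i.e. the sequence (a_y) attains its maximum over the natural numbers at y_m. -/
/-!
The ratio of consecutive terms is `a (n + 1) / a n = (r / (n + 1)) ^ ν` with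
`r = μ / (1 - p) ^ (1 / ν)`, which is at least `1` exactly while `n + 1 ≤ r`. Hence the sequence
increases up to `⌊r⌋₊` and decreases afterwards.
-/

open Nat

theorem apply_le_apply_of_unimodal {α : Type*} [Preorder α] {f : ℕ → α} {m : ℕ}
    (hinc : ∀ n < m, f n ≤ f (n + 1)) (hdec : ∀ n ≥ m, f (n + 1) ≤ f n) (y : ℕ) :
    f y ≤ f m := by
  rcases le_total y m with hym | hmy
  · refine monotoneOn_of_le_add_one Set.ordConnected_Iic (fun n _ _ hn ↦ hinc n ?_)
      hym Set.self_mem_Iic hym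
    exact Nat.lt_of_add_one_le hn
  · exact antitoneOn_of_add_one_le Set.ordConnected_Ici (fun n _ hn _ ↦ hdec n hn)
      Set.self_mem_Ici hmy hmy

theorem apply_le_apply_floor_of_succ_eq_mul_div_rpow {a : ℕ → ℝ} {r ν : ℝ}
    (hr : 0 ≤ r) (hν : 0 ≤ ν) (ha : ∀ n, 0 ≤ a n)
    (hrec : ∀ n : ℕ, a (n + 1) = a n * (r / (n + 1)) ^ ν) (y : ℕ) :
    a y ≤ a ⌊r⌋₊ := by
  refine apply_le_apply_of_unimodal (fun n hn ↦ ?_) (fun n hn ↦ ?_) y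
  · have hnr : (n : ℝ) + 1 ≤ r := by
      calc (n : ℝ) + 1 ≤ ⌊r⌋₊ := by exact_mod_cast hn
        _ ≤ r := Nat.floor_le hr
    rw [hrec]
    refine le_mul_of_one_le_right (ha n) (Real.one_le_rpow ?_ hν)
    rwa [one_le_div (by positivity)]
  · have hrn : r ≤ (n : ℝ) + 1 := by
      calc r ≤ ⌊r⌋₊ + 1 := (Nat.lt_floor_add_one r).le
        _ ≤ n + 1 := by exact_mod_cast Nat.add_le_add_right hn 1
    rw [hrec]
    refine mul_le_of_le_one_right (ha n) (Real.rpow_le_one (by positivity) ?_ hν)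
    rwa [div_le_one (by positivity)]

theorem rpow_mul_div_pow_mul_factorial_rpow_succ {μ q ν : ℝ} (hμ : 0 < μ) (hq : 0 < q)
    (hν : ν ≠ 0) (n : ℕ) :
    μ ^ (ν * ((n + 1 : ℕ) : ℝ)) / (q ^ (n + 1) * ((n + 1)! : ℝ) ^ ν) =
      μ ^ (ν * (n : ℝ)) / (q ^ n * (n ! : ℝ) ^ ν) * (μ / q ^ (1 / ν) / (n + 1)) ^ ν := by
  have hfac : (0 : ℝ) < n ! := by exact_mod_cast Nat.factorial_pos n
  have hq_rpow : (q ^ (1 / ν)) ^ ν = q := by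
    rw [← Real.rpow_mul hq.le, one_div_mul_cancel hν, Real.rpow_one]
  rw [Real.div_rpow (by positivity) (by positivity), Real.div_rpow hμ.le (by positivity),
    hq_rpow, Nat.factorial_succ, Nat.cast_mul, Real.mul_rpow (by positivity) hfac.le,
    Nat.cast_succ, mul_add, mul_one, Real.rpow_add hμ, pow_succ]
  field_simp

theorem stmt_5_general (μ ν p : ℝ) (hμ : 0 < μ) (hν : 0 < ν) (hp1 : p < 1)
    (a : ℕ → ℝ)
    (ha : ∀ y : ℕ, a y = μ ^ (ν * (y : ℝ)) / ((1 - p) ^ y * (Nat.factorial y : ℝ) ^ ν))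
    (y : ℕ) :
    a y ≤ a ⌊μ / (1 - p) ^ (1 / ν)⌋₊ := by
  have hq : 0 < 1 - p := sub_pos.mpr hp1
  refine apply_le_apply_floor_of_succ_eq_mul_div_rpow (by positivity) hν.le
    (fun n ↦ ?_) (fun n ↦ ?_) y
  · rw [ha]
    positivity
  · rw [ha, ha]
    exact rpow_mul_div_pow_mul_factorial_rpow_succ hμ hq hν.ne' n

/-- For `μ > 0`, `ν > 0`, `0 < p < 1` and
`a_y := μ^(νy) / ((1−p)^y · (y!)^ν)`, the sequence `(a_y)` attains its maximum over ℕ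
at `y_m := ⌊μ/(1−p)^(1/ν)⌋`. -/
theorem stmt_5 (μ ν p : ℝ) (hμ : 0 < μ) (hν : 0 < ν) (hp0 : 0 < p) (hp1 : p < 1)
    (a : ℕ → ℝ)
    (ha : ∀ y : ℕ, a y = μ ^ (ν * (y : ℝ)) / ((1 - p) ^ y * (Nat.factorial y : ℝ) ^ ν))
    (y : ℕ) :
    a y ≤ a ⌊μ / (1 - p) ^ (1 / ν)⌋₊ :=
  stmt_5_general μ ν p hμ hν hp1 a ha y
end

section
/- Let μ > 0, 0 < ν < 1 and 0 < p < 1 be real numbers, set y_m := ⌊μ/(1−p)^(1/ν)⌋ and B := (1/p) · μ^(ν·y_m) / ((1−p)^(y_m) · (y_m!)^ν). Then for every natural number y, (μ^y / y!)^ν ≤ B · p(1−p)^y. In other words, the unnormalised COM-Poisson mass function with parameters (μ, ν) is dominated by B times the geometric(p) mass function. -/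
/-!
Put `c := μ / (1 - p) ^ (1 / ν)`, so that `μ = c (1 - p) ^ (1 / ν)` and hence
`(μ ^ y / y!) ^ ν = (c ^ y / y!) ^ ν (1 - p) ^ y`. The Poisson weights `c ^ y / y!` grow
while `y + 1 ≤ c` and decay afterwards, so they peak at `y = ⌊c⌋₊ = ym`; the envelope
constant `B` is exactly the value of `(μ ^ y / y!) ^ ν / (p (1 - p) ^ y)` at that peak.
-/

open Nat

theorem Nat.le_apply_of_le_succ_of_succ_le {α : Type*} [Preorder α] {f : ℕ → α} {m : ℕ}
    (hup : ∀ n < m, f n ≤ f (n + 1)) (hdown : ∀ n ≥ m, f (n + 1) ≤ f n) (n : ℕ) :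
    f n ≤ f m := by
  rcases le_total n m with h | h
  · exact Nat.decreasingInduction (motive := fun k _ => f k ≤ f m)
      (fun k hk ih => (hup k hk).trans ih) le_rfl h
  · exact antitoneOn_nat_Ici_of_succ_le hdown (Set.mem_ofPred.mpr le_rfl) h h

theorem pow_succ_div_factorial_succ (c : ℝ) (n : ℕ) :
    c ^ (n + 1) / (n + 1)! = c ^ n / n ! * (c / (n + 1)) := by
  rw [pow_succ, Nat.factorial_succ]
  push_cast
  field_simp

theorem pow_div_factorial_le_floor {c : ℝ} (hc : 0 ≤ c) (n : ℕ) :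
    c ^ n / n ! ≤ c ^ ⌊c⌋₊ / (⌊c⌋₊)! := by
  refine Nat.le_apply_of_le_succ_of_succ_le (f := fun n => c ^ n / n !) (fun n hn => ?_)
    (fun n hn => ?_) n
  · have hle : (n : ℝ) + 1 ≤ c := by exact_mod_cast (Nat.le_floor_iff hc).mp hn
    rw [pow_succ_div_factorial_succ]
    exact le_mul_of_one_le_right (by positivity) ((one_le_div (by positivity)).mpr hle)
  · have hlt : c < n + 1 :=
      (Nat.lt_floor_add_one c).trans_le (by exact_mod_cast Nat.succ_le_succ hn)
    rw [pow_succ_div_factorial_succ]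
    exact mul_le_of_le_one_right (by positivity) ((div_le_one (by positivity)).mpr hlt.le)

theorem mul_pow_div_factorial_rpow {c b : ℝ} (hc : 0 ≤ c) (hb : 0 ≤ b) (ν : ℝ) (n : ℕ) :
    ((c * b) ^ n / n !) ^ ν = (c ^ n / n !) ^ ν * (b ^ ν) ^ n := by
  rw [mul_pow, mul_div_right_comm, Real.mul_rpow (by positivity) (by positivity),
    ← Real.rpow_natCast_mul hb, mul_comm (n : ℝ), Real.rpow_mul_natCast hb]

theorem stmt_6_general (μ ν p : ℝ) (hμ : 0 < μ) (hν0 : 0 < ν)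
    (hp0 : 0 < p) (hp1 : p < 1)
    (ym : ℕ) (hym : ym = ⌊μ / (1 - p) ^ (1 / ν)⌋₊)
    (B : ℝ)
    (hB : B = (1 / p) * (μ ^ (ν * (ym : ℝ)) /
      ((1 - p) ^ ym * (Nat.factorial ym : ℝ) ^ ν)))
    (y : ℕ) :
    (μ ^ y / (Nat.factorial y : ℝ)) ^ ν ≤ B * (p * (1 - p) ^ y) := by
  have ha : 0 < 1 - p := by linarith
  set b := (1 - p) ^ (1 / ν) with hb_def
  set c := μ / b
  have hb : 0 < b := Real.rpow_pos_of_pos ha _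
  have hc : 0 ≤ c := by positivity
  have hμc : μ = c * b := (div_mul_cancel₀ μ hb.ne').symm
  have hbν : b ^ ν = 1 - p := by rw [hb_def, one_div, Real.rpow_inv_rpow ha.le hν0.ne']
  have hrescale (n : ℕ) : (μ ^ n / n !) ^ ν = (c ^ n / n !) ^ ν * (1 - p) ^ n := by
    rw [hμc, mul_pow_div_factorial_rpow hc hb.le, hbν]
  have hBp : B * p = (c ^ ym / ym !) ^ ν := by
    have hpeak := hrescale ym
    rw [Real.div_rpow (by positivity) (by positivity), ← Real.rpow_natCast_mul hμ.le,
      mul_comm (ym : ℝ)] at hpeak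
    rw [hB, eq_div_of_mul_eq (by positivity) hpeak.symm]
    field_simp
  calc (μ ^ y / y !) ^ ν = (c ^ y / y !) ^ ν * (1 - p) ^ y := hrescale y
    _ ≤ (c ^ ym / ym !) ^ ν * (1 - p) ^ y := by
        gcongr ?_ ^ ν * _
        rw [hym]
        exact pow_div_factorial_le_floor hc y
    _ = B * (p * (1 - p) ^ y) := by rw [← hBp, mul_assoc]

/-- For `μ > 0`, `0 < ν < 1`, `0 < p < 1`,
`y_m := ⌊μ/(1−p)^(1/ν)⌋` and `B := (1/p) · μ^(ν·y_m) / ((1−p)^(y_m) · (y_m!)^ν)`,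
for every natural `y`, `(μ^y / y!)^ν ≤ B · p(1−p)^y` (geometric envelope inequality). -/
theorem stmt_6 (μ ν p : ℝ) (hμ : 0 < μ) (hν0 : 0 < ν) (hν1 : ν < 1)
    (hp0 : 0 < p) (hp1 : p < 1)
    (ym : ℕ) (hym : ym = ⌊μ / (1 - p) ^ (1 / ν)⌋₊)
    (B : ℝ)
    (hB : B = (1 / p) * (μ ^ (ν * (ym : ℝ)) /
      ((1 - p) ^ ym * (Nat.factorial ym : ℝ) ^ ν)))
    (y : ℕ) :
    (μ ^ y / (Nat.factorial y : ℝ)) ^ ν ≤ B * (p * (1 - p) ^ y) :=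
  stmt_6_general μ ν p hμ hν0 hp0 hp1 ym hym B hB y
end

section
/- Let μ > 0, ν > 0 and 0 < p < 1 be real numbers, and for natural numbers y define a_y := μ^(νy) / ((1−p)^y · (y!)^ν). Then the sequence (a_y) is unimodal: a_{y+1} ≥ a_y if and only if y + 1 ≤ μ/(1−p)^(1/ν), and a_{y+1} ≤ a_y if and only if y + 1 ≥ μ/(1−p)^(1/ν); consequently (a_y) is nondecreasing for y ≤ ⌊μ/(1−p)^(1/ν)⌋ and nonincreasing for y ≥ ⌊μ/(1−p)^(1/ν)⌋. -/
/-!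
With `M = μ / (1 - p) ^ (1 / ν)` one has `a_y = (M ^ y / y!) ^ ν`, and `x ↦ x ^ ν` is strictly
increasing on `[0, ∞)`. So `a` rises or falls exactly where the Poisson weights `M ^ y / y!` do,
and their consecutive ratio is `M / (y + 1)`.
-/

open Nat Real

lemma pow_div_factorial_succ (M : ℝ) (y : ℕ) :
    M ^ (y + 1) / ((y + 1)! : ℝ) = M ^ y / (y ! : ℝ) * (M / ((y : ℝ) + 1)) := by
  push_cast [factorial_succ]
  field_simp
  ring

lemma pow_div_factorial_le_succ_iff {M : ℝ} (hM : 0 < M) (y : ℕ) :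
    M ^ y / (y ! : ℝ) ≤ M ^ (y + 1) / ((y + 1)! : ℝ) ↔ (y : ℝ) + 1 ≤ M := by
  rw [pow_div_factorial_succ, le_mul_iff_one_le_right (by positivity), one_le_div (by positivity)]

lemma pow_div_factorial_succ_le_iff {M : ℝ} (hM : 0 < M) (y : ℕ) :
    M ^ (y + 1) / ((y + 1)! : ℝ) ≤ M ^ y / (y ! : ℝ) ↔ M ≤ (y : ℝ) + 1 := by
  rw [pow_div_factorial_succ, mul_le_iff_le_one_right (by positivity), div_le_one (by positivity)]

lemma monotoneOn_Iic_floor_of_le_succ {β : Type*} [Preorder β] {f : ℕ → β} {M : ℝ} (hM : 0 ≤ M)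
    (hf : ∀ y : ℕ, (y : ℝ) + 1 ≤ M → f y ≤ f (y + 1)) : MonotoneOn f (Set.Iic ⌊M⌋₊) :=
  monotoneOn_of_le_add_one Set.ordConnected_Iic fun y _ _ hy =>
    hf y (by exact_mod_cast (le_floor_iff hM).1 hy)

lemma antitoneOn_Ici_floor_of_succ_le {β : Type*} [Preorder β] {f : ℕ → β} {M : ℝ}
    (hf : ∀ y : ℕ, M ≤ (y : ℝ) + 1 → f (y + 1) ≤ f y) : AntitoneOn f (Set.Ici ⌊M⌋₊) :=
  antitoneOn_of_add_one_le Set.ordConnected_Ici fun y _ (hy : ⌊M⌋₊ ≤ y) _ => by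
    have : (⌊M⌋₊ : ℝ) ≤ y := by exact_mod_cast hy
    exact hf y (by linarith [lt_floor_add_one M])

lemma rpow_mul_div_eq_pow_div_factorial_rpow {μ ν q : ℝ} (hμ : 0 ≤ μ) (hν : ν ≠ 0) (hq : 0 < q) (y : ℕ) :
    μ ^ (ν * (y : ℝ)) / (q ^ y * (y ! : ℝ) ^ ν) = ((μ / q ^ (1 / ν)) ^ y / (y ! : ℝ)) ^ ν := by
  have hMν : (μ / q ^ (1 / ν)) ^ ν = μ ^ ν / q := by
    rw [div_rpow hμ (by positivity), one_div, rpow_inv_rpow hq.le hν]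
  rw [div_rpow (by positivity) (by positivity), ← rpow_pow_comm (by positivity), hMν, div_pow,
    ← rpow_mul_natCast hμ, div_div]

theorem stmt_19_general (μ ν p : ℝ) (hμ : 0 < μ) (hν : 0 < ν) (hp1 : p < 1)
    (a : ℕ → ℝ)
    (ha : ∀ y : ℕ, a y = μ ^ (ν * (y : ℝ)) / ((1 - p) ^ y * (Nat.factorial y : ℝ) ^ ν)) :
    (∀ y : ℕ, a y ≤ a (y + 1) ↔ (y : ℝ) + 1 ≤ μ / (1 - p) ^ (1 / ν)) ∧
    (∀ y : ℕ, a (y + 1) ≤ a y ↔ μ / (1 - p) ^ (1 / ν) ≤ (y : ℝ) + 1) ∧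
    MonotoneOn a (Set.Iic ⌊μ / (1 - p) ^ (1 / ν)⌋₊) ∧
    AntitoneOn a (Set.Ici ⌊μ / (1 - p) ^ (1 / ν)⌋₊) := by
  have hq : 0 < 1 - p := sub_pos.2 hp1
  set M := μ / (1 - p) ^ (1 / ν)
  have hM : 0 < M := by positivity
  have ha' (y : ℕ) : a y = (M ^ y / (y ! : ℝ)) ^ ν :=
    (ha y).trans (rpow_mul_div_eq_pow_div_factorial_rpow hμ.le hν.ne' hq y)
  have hup (y : ℕ) : a y ≤ a (y + 1) ↔ (y : ℝ) + 1 ≤ M := by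
    rw [ha', ha', rpow_le_rpow_iff (by positivity) (by positivity) hν,
      pow_div_factorial_le_succ_iff hM]
  have hdown (y : ℕ) : a (y + 1) ≤ a y ↔ M ≤ (y : ℝ) + 1 := by
    rw [ha', ha', rpow_le_rpow_iff (by positivity) (by positivity) hν,
      pow_div_factorial_succ_le_iff hM]
  exact ⟨hup, hdown, monotoneOn_Iic_floor_of_le_succ hM.le fun y => (hup y).2,
    antitoneOn_Ici_floor_of_succ_le fun y => (hdown y).2⟩

/-- For `μ > 0`, `ν > 0`, `0 < p < 1` and
`a_y := μ^(νy) / ((1−p)^y · (y!)^ν)`, the sequence `(a_y)` is unimodal: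
`a_{y+1} ≥ a_y ↔ y + 1 ≤ μ/(1−p)^(1/ν)` and `a_{y+1} ≤ a_y ↔ y + 1 ≥ μ/(1−p)^(1/ν)`;
consequently `(a_y)` is nondecreasing for `y ≤ ⌊μ/(1−p)^(1/ν)⌋` and nonincreasing for
`y ≥ ⌊μ/(1−p)^(1/ν)⌋`. -/
theorem stmt_19 (μ ν p : ℝ) (hμ : 0 < μ) (hν : 0 < ν) (hp0 : 0 < p) (hp1 : p < 1)
    (a : ℕ → ℝ)
    (ha : ∀ y : ℕ, a y = μ ^ (ν * (y : ℝ)) / ((1 - p) ^ y * (Nat.factorial y : ℝ) ^ ν)) :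
    (∀ y : ℕ, a y ≤ a (y + 1) ↔ (y : ℝ) + 1 ≤ μ / (1 - p) ^ (1 / ν)) ∧
    (∀ y : ℕ, a (y + 1) ≤ a y ↔ μ / (1 - p) ^ (1 / ν) ≤ (y : ℝ) + 1) ∧
    MonotoneOn a (Set.Iic ⌊μ / (1 - p) ^ (1 / ν)⌋₊) ∧
    AntitoneOn a (Set.Ici ⌊μ / (1 - p) ^ (1 / ν)⌋₊) :=
  stmt_19_general μ ν p hμ hν hp1 a ha
end
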